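/- In Kripke semantics for the {⊤, ∧, →}-fragment of intuitionistic logic: let (F₁, V₁) and (F₂, V₂) be rooted Kripke models with roots r₁, r₂ such that r₁ does not force φ and r₂ does not force ψ, while r₁ and r₂ both force the variable z, and z does not occur in φ or ψ. Form the model (F, V) obtained as the disjoint union of the two models with a new root r below both, where r does not force z (and forces no variables, say). Then r does not force ((φ → z) ∧ (ψ → z)) → z. -/
import Mathlib


/-- Formulas of the `{⊤, ∧, →}`-fragment of intuitionistic propositional
logic. -/
inductive CForm where
  | var : ℕ → CForm
  | top : CForm
  | conj : CForm → CForm → CForm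
  | impl : CForm → CForm → CForm

/-- Variables occurring in a formula. -/
def CForm.vars : CForm → Set ℕ
  | .var n => {n}
  | .top => ∅
  | .conj a b => a.vars ∪ b.vars
  | .impl a b => a.vars ∪ b.vars

/-- Kripke forcing over a preorder with an upset valuation. -/
def force {W : Type*} [Preorder W] (val : ℕ → Set W) : W → CForm → Prop
  | w, .var n => w ∈ val n
  | _, .top => True
  | w, .conj a b => force val w a ∧ force val w b
  | w, .impl a b => ∀ v, w ≤ v → force val v a → force val v b

lemma force_persist {W : Type*} [Preorder W] (val : ℕ → Set W)
    (hup : ∀ n, IsUpperSet (val n)) :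
    ∀ (χ : CForm) (w v : W), w ≤ v → force val w χ → force val v χ := by
  intro χ
  induction χ with
  | var n => intro w v hwv h; exact hup n hwv h
  | top => intro _ _ _ _; trivial
  | conj a b iha ihb => intro w v hwv h; exact ⟨iha w v hwv h.1, ihb w v hwv h.2⟩
  | impl a b iha ihb =>
      intro w v hwv h u hvu ha
      exact h u (le_trans hwv hvu) ha

lemma force_transfer {W₁ W : Type*} [PartialOrder W₁] [PartialOrder W]
    (val₁ : ℕ → Set W₁) (val' : ℕ → Set W) (ι : W₁ → W)
    (hemb : ∀ a b : W₁, a ≤ b ↔ ι a ≤ ι b)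
    (hclosed : ∀ (a : W₁) (w : W), ι a ≤ w → ∃ a', ι a' = w)
    (hval : ∀ n a, ι a ∈ val' n ↔ a ∈ val₁ n) :
    ∀ (χ : CForm) (a : W₁), force val' (ι a) χ ↔ force val₁ a χ := by
  intro χ
  induction χ with
  | var n => intro a; exact hval n a
  | top => intro a; simp [force]
  | conj c d ihc ihd => intro a; exact and_congr (ihc a) (ihd a)
  | impl c d ihc ihd =>
      intro a
      constructor
      · intro h b hab hc
        exact (ihd b).1 (h (ι b) ((hemb a b).1 hab) ((ihc b).2 hc))
      · intro h w hw hc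
        obtain ⟨b, rfl⟩ := hclosed a w hw
        exact (ihd b).2 (h b ((hemb a b).2 hw) ((ihc b).1 hc))

/-- Given rooted Kripke models `(W₁, V₁)`, `(W₂, V₂)` whose roots
`r₁, r₂` refute `φ`, `ψ` respectively but force the variable `z` (not occurring
in `φ, ψ`), in the model formed as their disjoint union with a new root `r`
below both where `r` forces no variables (in particular not `z`), the root `r`
does not force `((φ → z) ∧ (ψ → z)) → z`. -/
theorem stmt16 {W₁ W₂ : Type*} [PartialOrder W₁] [PartialOrder W₂]
    (val₁ : ℕ → Set W₁) (val₂ : ℕ → Set W₂)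
    (hup₁ : ∀ n, IsUpperSet (val₁ n)) (hup₂ : ∀ n, IsUpperSet (val₂ n))
    (r₁ : W₁) (hr₁ : ∀ w, r₁ ≤ w) (r₂ : W₂) (hr₂ : ∀ w, r₂ ≤ w)
    (zv : ℕ) (φ ψ : CForm) (hzφ : zv ∉ φ.vars) (hzψ : zv ∉ ψ.vars)
    (hφ : ¬ force val₁ r₁ φ) (hψ : ¬ force val₂ r₂ ψ)
    (hz₁ : r₁ ∈ val₁ zv) (hz₂ : r₂ ∈ val₂ zv) :
    ∀ (W : Type*) [PartialOrder W] (ι₁ : W₁ → W) (ι₂ : W₂ → W) (r : W)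
      (val' : ℕ → Set W),
      -- the components embed as order-embeddings
      (∀ a b : W₁, a ≤ b ↔ ι₁ a ≤ ι₁ b) →
      (∀ a b : W₂, a ≤ b ↔ ι₂ a ≤ ι₂ b) →
      -- r is a new least element (the new root)
      (∀ w : W, r ≤ w) →
      (∀ a, ι₁ a ≠ r) → (∀ b, ι₂ b ≠ r) →
      -- W is the disjoint union of the two components plus the root
      (∀ w : W, w = r ∨ (∃ a, ι₁ a = w) ∨ (∃ b, ι₂ b = w)) →
      -- the images of the components are upward closed
      (∀ (a : W₁) (w : W), ι₁ a ≤ w → ∃ a', ι₁ a' = w) →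
      (∀ (b : W₂) (w : W), ι₂ b ≤ w → ∃ b', ι₂ b' = w) →
      -- val' is an upset valuation extending val₁ and val₂, empty at r
      (∀ n, IsUpperSet (val' n)) →
      (∀ n a, ι₁ a ∈ val' n ↔ a ∈ val₁ n) →
      (∀ n b, ι₂ b ∈ val' n ↔ b ∈ val₂ n) →
      (∀ n, r ∉ val' n) →
      ¬ force val' r
        (.impl (.conj (.impl φ (.var zv)) (.impl ψ (.var zv))) (.var zv)) := by
  intro W _ ι₁ ι₂ r val' hemb₁ hemb₂ hroot hne₁ hne₂ hcover hcl₁ hcl₂ hup' hv₁ hv₂ hvr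
  intro h
  have t₁ := force_transfer val₁ val' ι₁ hemb₁ hcl₁ hv₁
  have t₂ := force_transfer val₂ val' ι₂ hemb₂ hcl₂ hv₂
  have himpl₁ : force val' r (.impl φ (.var zv)) := by
    intro v hv hφv
    rcases hcover v with rfl | ⟨a, rfl⟩ | ⟨b, rfl⟩
    · exfalso
      exact hφ ((t₁ φ r₁).1 (force_persist val' hup' φ v (ι₁ r₁) (hroot _) hφv))
    · exact (hv₁ zv a).2 (hup₁ zv (hr₁ a) hz₁)
    · exact (hv₂ zv b).2 (hup₂ zv (hr₂ b) hz₂)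
  have himpl₂ : force val' r (.impl ψ (.var zv)) := by
    intro v hv hψv
    rcases hcover v with rfl | ⟨a, rfl⟩ | ⟨b, rfl⟩
    · exfalso
      exact hψ ((t₂ ψ r₂).1 (force_persist val' hup' ψ v (ι₂ r₂) (hroot _) hψv))
    · exact (hv₁ zv a).2 (hup₁ zv (hr₁ a) hz₁)
    · exact (hv₂ zv b).2 (hup₂ zv (hr₂ b) hz₂)
  exact hvr zv (h r le_rfl ⟨himpl₁, himpl₂⟩)
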